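/- Let T be a finitely generated right R-module with S = End_R(T), and suppose that for every finitely generated right R-module X the left S-module Hom_R(X,T) is finitely generated. Then for every finitely presented right R-module X, the group Ext¹_R(X,T), equipped with its left S-module structure induced by the action of S = End_R(T) on T through the functoriality of Ext¹_R(X,−), is a finitely presented left S-module. -/

import Mathlib

universe v

/-- The canonical free presentation map `(X →₀ A) → X`, sending `∑ aₓ·[x] ↦ ∑ aₓ·x`
(it is surjective, with free source). -/
noncomputable def presMap (A : Type u) [Ring A] (X : Type u) [AddCommGroup X] [Module A X] :
    (X →₀ A) →ₗ[A] X :=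
  Finsupp.linearCombination A id

/-- The syzygy module of `X`: the kernel of the canonical free presentation, so that
`0 → syz A X → (X →₀ A) → X → 0` is exact with `(X →₀ A)` free. -/
noncomputable abbrev syz (A : Type u) [Ring A] (X : Type u) [AddCommGroup X] [Module A X] :
    Submodule A (X →₀ A) :=
  LinearMap.ker (presMap A X)

/-- The restriction map `Hom_A(X →₀ A, T) → Hom_A(syz A X, T)`; it is `S`-linear for
any action of `S` on `T` commuting with the `A`-action (e.g. postcomposition by
`A`-endomorphisms of `T`). -/
noncomputable def restrMap (A : Type u) [Ring A] (S : Type v) [Ring S]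
    (X : Type u) [AddCommGroup X] [Module A X]
    (T : Type u) [AddCommGroup T] [Module A T] [Module S T] [SMulCommClass A S T] :
    ((X →₀ A) →ₗ[A] T) →ₗ[S] (↥(syz A X) →ₗ[A] T) where
  toFun f := f.comp (syz A X).subtype
  map_add' _ _ := rfl
  map_smul' _ _ := rfl

/-- A concrete model of `Ext¹_A(X, T)`: the cokernel of the restriction map
`Hom_A(X →₀ A, T) → Hom_A(syz A X, T)` coming from the canonical free (hence
projective) presentation `0 → syz A X → (X →₀ A) → X → 0` of `X`. It is an
`S`-module for any action of `S` on `T` commuting with the `A`-action; this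
`S`-module structure is the one induced by functoriality of `Ext¹_A(X, −)`. -/
noncomputable abbrev Ext1 (A : Type u) [Ring A] (S : Type v) [Ring S]
    (X : Type u) [AddCommGroup X] [Module A X]
    (T : Type u) [AddCommGroup T] [Module A T] [Module S T] [SMulCommClass A S T] : Type u :=
  (↥(syz A X) →ₗ[A] T) ⧸ LinearMap.range (restrMap A S X T)

noncomputable def precompS (A : Type u) [Ring A] (S : Type v) [Ring S]
    (T : Type u) [AddCommGroup T] [Module A T] [Module S T] [SMulCommClass A S T]
    {M N : Type u} [AddCommGroup M] [Module A M] [AddCommGroup N] [Module A N]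
    (u : M →ₗ[A] N) : (N →ₗ[A] T) →ₗ[S] (M →ₗ[A] T) where
  toFun f := f.comp u
  map_add' _ _ := rfl
  map_smul' _ _ := rfl


lemma hom_fp (R : Type u) [Ring R]
    (T : Type u) [AddCommGroup T] [Module R T] [Module.Finite R T]
    (hyp : ∀ (X : Type u) [AddCommGroup X] [Module R X],
      Module.Finite R X → Module.Finite (Module.End R T) (X →ₗ[R] T))
    (Y : Type u) [AddCommGroup Y] [Module R Y] (hY : Module.Finite R Y) :
    Module.FinitePresentation (Module.End R T) (Y →ₗ[R] T) := by
  classical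
  set S := Module.End R T with hSdef
  haveI hfin : Module.Finite S (Y →ₗ[R] T) := hyp Y hY
  obtain ⟨s, hs⟩ := Module.finite_def.mp hfin
  let f : (s →₀ S) →ₗ[S] (Y →ₗ[R] T) := Finsupp.linearCombination S Subtype.val
  have hf : Function.Surjective f := by
    rw [← LinearMap.range_eq_top, Finsupp.range_linearCombination, Subtype.range_val]
    exact hs
  apply Module.finitePresentation_of_surjective f hf
  -- evaluation map  g : Y →ₗ[R] (s → T)
  let g : Y →ₗ[R] (s → T) := LinearMap.pi fun i => (i : Y →ₗ[R] T)
  let Q := (s → T) ⧸ LinearMap.range g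
  haveI : Module.Finite R Q :=
    Module.Finite.of_surjective (LinearMap.range g).mkQ (Submodule.mkQ_surjective _)
  haveI hQ : Module.Finite S (Q →ₗ[R] T) := hyp Q inferInstance
  let Θ' : (Q →ₗ[R] T) →ₗ[S] (s → S) :=
    LinearMap.pi fun i =>
      { toFun := fun h =>
          ((h.comp (LinearMap.range g).mkQ).comp (LinearMap.single R (fun _ : s => T) i) :
            T →ₗ[R] T)
        map_add' := fun _ _ => rfl
        map_smul' := fun _ _ => rfl }
  let Θ : (Q →ₗ[R] T) →ₗ[S] (s →₀ S) :=
    (Finsupp.linearEquivFunOnFinite S S s).symm.toLinearMap.comp Θ'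
  have key : LinearMap.range Θ = LinearMap.ker f := by
    apply le_antisymm
    · rintro _ ⟨h, rfl⟩
      rw [LinearMap.mem_ker]
      have hsum : f (Θ h) = ∑ i : s, (Θ h) i • (i : Y →ₗ[R] T) := by
        simp only [f, Finsupp.linearCombination_apply]
        exact Finsupp.sum_fintype _ _ (fun i => zero_smul S _)
      ext y
      have e1 : ∀ i : s, ((Θ h) i • (i : Y →ₗ[R] T)) y =
          h ((LinearMap.range g).mkQ (Pi.single i ((i : Y →ₗ[R] T) y))) := fun i => rfl
      calc (f (Θ h)) y = ∑ i : s, ((Θ h) i • (i : Y →ₗ[R] T)) y := by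
            rw [hsum, LinearMap.sum_apply]
        _ = ∑ i : s, h ((LinearMap.range g).mkQ (Pi.single i ((i : Y →ₗ[R] T) y))) :=
            Finset.sum_congr rfl fun i _ => e1 i
        _ = h ((LinearMap.range g).mkQ (∑ i : s, Pi.single i ((i : Y →ₗ[R] T) y))) := by
            rw [map_sum, map_sum]
        _ = h ((LinearMap.range g).mkQ (g y)) := by
            congr 1
            exact congrArg _ (Finset.univ_sum_single (g y))
        _ = h 0 := by
            rw [Submodule.mkQ_apply, (Submodule.Quotient.mk_eq_zero _).mpr (LinearMap.mem_range_self g y)]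
        _ = 0 := map_zero h
    · intro σ hσ
      rw [LinearMap.mem_ker] at hσ
      let H : (s → T) →ₗ[R] T := ∑ i : s, (σ i : Module.End R T) ∘ₗ LinearMap.proj i
      have hsum : f σ = ∑ i : s, σ i • (i : Y →ₗ[R] T) := by
        simp only [f, Finsupp.linearCombination_apply]
        exact Finsupp.sum_fintype _ _ (fun i => zero_smul S _)
      have hHg : ∀ y, H (g y) = 0 := by
        intro y
        have e2 : H (g y) = (f σ) y := by
          rw [hsum, LinearMap.sum_apply]
          simp only [H, LinearMap.sum_apply, LinearMap.comp_apply, LinearMap.proj_apply,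
            LinearMap.smul_apply]
          rfl
        rw [e2, hσ, LinearMap.zero_apply]
      have hle : LinearMap.range g ≤ LinearMap.ker H := by
        rintro _ ⟨y, rfl⟩; exact hHg y
      refine ⟨(LinearMap.range g).liftQ H hle, ?_⟩
      apply Finsupp.ext
      intro i
      have : (Θ ((LinearMap.range g).liftQ H hle)) i =
          (((LinearMap.range g).liftQ H hle).comp (LinearMap.range g).mkQ).comp
            (LinearMap.single R (fun _ : s => T) i) := rfl
      apply LinearMap.ext
      intro t
      rw [this]
      simp only [LinearMap.comp_apply, LinearMap.single_apply, Submodule.liftQ_mkQ]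
      show H (Pi.single i t) = σ i t
      simp only [H, LinearMap.sum_apply, LinearMap.comp_apply, LinearMap.proj_apply]
      rw [Finset.sum_eq_single i]
      · rw [Pi.single_eq_same]
      · intro j _ hji
        rw [Pi.single_eq_of_ne hji, map_zero]
      · intro hi; exact absurd (Finset.mem_univ i) hi
  rw [← key, LinearMap.range_eq_map]
  exact (Module.finite_def.mp hQ).map Θ

/-- **Proposition 3.4** (part (3)). Let `T` be a finitely generated `R`-module with
`S = End_R(T)`, and suppose `Hom_R(X, T)` is a finitely generated `S`-module for
every finitely generated `R`-module `X`. Then for every finitely presented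
`R`-module `X`, the `S`-module `Ext¹_R(X, T)` — with the `S`-action induced by the
action of `S` on `T` through functoriality of `Ext¹_R(X, −)`, i.e. by
postcomposition on the concrete model — is finitely presented. -/
theorem ext1_finitePresentation (R : Type u) [Ring R]
    (T : Type u) [AddCommGroup T] [Module R T] [Module.Finite R T]
    (hyp : ∀ (X : Type u) [AddCommGroup X] [Module R X],
      Module.Finite R X → Module.Finite (Module.End R T) (X →ₗ[R] T))
    (X : Type u) [AddCommGroup X] [Module R X]
    (hX : Module.FinitePresentation R X) :
    Module.FinitePresentation (Module.End R T) (Ext1 R (Module.End R T) X T) := by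
  classical
  set S := Module.End R T with hSdef
  obtain ⟨s, hs, hker⟩ := hX.out
  -- the finite presentation
  let G := (s →₀ R)
  let q : G →ₗ[R] X := Finsupp.linearCombination R Subtype.val
  have hq : Function.Surjective q := by
    rw [← LinearMap.range_eq_top, Finsupp.range_linearCombination, Subtype.range_val]
    exact hs
  let p : (X →₀ R) →ₗ[R] X := presMap R X
  have hp : Function.Surjective p := Finsupp.linearCombination_id_surjective R X
  -- comparison lifts
  let sec : X → G := fun x => Classical.choose (hq x)
  have hsec : ∀ x, q (sec x) = x := fun x => Classical.choose_spec (hq x)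
  let α : (X →₀ R) →ₗ[R] G := Finsupp.linearCombination R sec
  have hα : q.comp α = p := by
    apply Finsupp.lhom_ext
    intro x c
    simp only [LinearMap.comp_apply, α, p, presMap, Finsupp.linearCombination_single, map_smul,
      hsec, id_eq]
  let β : G →ₗ[R] (X →₀ R) := Finsupp.linearCombination R (fun i : s => Finsupp.single (i : X) 1)
  have hβ : p.comp β = q := by
    apply Finsupp.lhom_ext
    intro i c
    simp only [LinearMap.comp_apply, β, q, p, presMap, Finsupp.linearCombination_single,
      map_smul, one_smul, id_eq]
  -- syzygies
  let K' : Submodule R G := LinearMap.ker q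
  have hαK : ∀ z ∈ syz R X, α z ∈ K' := by
    intro z hz
    have : q (α z) = p z := LinearMap.congr_fun hα z
    simpa [K', LinearMap.mem_ker, this] using hz
  have hβK : ∀ z ∈ K', β z ∈ syz R X := by
    intro z hz
    have : p (β z) = q z := LinearMap.congr_fun hβ z
    rw [LinearMap.mem_ker]; change p (β z) = 0; rw [this]; exact hz
  let αK : ↥(syz R X) →ₗ[R] ↥K' := α.restrict hαK
  let βK : ↥K' →ₗ[R] ↥(syz R X) := β.restrict hβK
  let Φ := precompS R S T (M := ↥(syz R X)) (N := ↥K') αK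
  let N : Submodule S (↥(syz R X) →ₗ[R] T) := LinearMap.range (restrMap R S X T)
  let r' := precompS R S T (M := ↥K') (N := G) K'.subtype
  let N' : Submodule S (↥K' →ₗ[R] T) := LinearMap.range r'
  have hcomp : N' ≤ N.comap Φ := by
    rintro _ ⟨gG, rfl⟩
    exact ⟨gG ∘ₗ α, rfl⟩
  let Φbar := Submodule.mapQ N' N Φ hcomp
  -- homotopies
  have hγmem : ∀ z : (X →₀ R), z - β (α z) ∈ syz R X := by
    intro z
    have h1 : q (α z) = p z := LinearMap.congr_fun hα z
    have h2 : p (β (α z)) = q (α z) := LinearMap.congr_fun hβ (α z)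
    simp [LinearMap.mem_ker, map_sub, h2, h1]
    change p z - p (β (α z)) = 0; rw [h2, h1, sub_self]
  let γ : (X →₀ R) →ₗ[R] ↥(syz R X) := (LinearMap.id - β ∘ₗ α).codRestrict (syz R X) hγmem
  have hδmem : ∀ z : G, z - α (β z) ∈ K' := by
    intro z
    have h1 : p (β z) = q z := LinearMap.congr_fun hβ z
    have h2 : q (α (β z)) = p (β z) := LinearMap.congr_fun hα (β z)
    simp [K', LinearMap.mem_ker, map_sub, h2, h1]
  let δ : G →ₗ[R] ↥K' := (LinearMap.id - α ∘ₗ β).codRestrict K' hδmem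
  -- Φbar is surjective
  have hsurj : Function.Surjective Φbar := by
    intro c
    obtain ⟨fK, rfl⟩ := Submodule.mkQ_surjective N c
    refine ⟨Submodule.Quotient.mk (fK ∘ₗ βK), ?_⟩
    rw [Submodule.mapQ_apply, Submodule.mkQ_apply, Submodule.Quotient.eq]
    refine ⟨-(fK ∘ₗ γ), ?_⟩
    apply LinearMap.ext
    intro k
    show -(fK (γ ((syz R X).subtype k))) = fK (βK (αK k)) - fK k
    rw [← map_neg fK, ← map_sub fK]
    congr 1
    apply Subtype.ext
    show -((k : X →₀ R) - β (α (k : X →₀ R))) = (β (α (k : X →₀ R)) - (k : X →₀ R))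
    rw [neg_sub]
  -- Φbar is injective
  have hinj : LinearMap.ker Φbar = ⊥ := by
    rw [eq_bot_iff]
    rintro c hc
    obtain ⟨h, rfl⟩ := Submodule.mkQ_surjective N' c
    rw [LinearMap.mem_ker, Submodule.mkQ_apply, Submodule.mapQ_apply] at hc
    have hmem : Φ h ∈ N := (Submodule.Quotient.mk_eq_zero N).mp hc
    obtain ⟨gF, hgF⟩ := hmem
    rw [Submodule.mem_bot, Submodule.mkQ_apply, Submodule.Quotient.mk_eq_zero]
    refine ⟨h ∘ₗ δ + gF ∘ₗ β, ?_⟩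
    apply LinearMap.ext
    intro k'
    have hg : ∀ k : ↥(syz R X), gF ((syz R X).subtype k) = h (αK k) :=
      fun k => LinearMap.congr_fun hgF k
    have e1 : gF (β (k' : G)) = h (αK (βK k')) := hg (βK k')
    show h (δ ((k' : G))) + gF (β (k' : G)) = h k'
    rw [e1, ← map_add h]
    congr 1
    apply Subtype.ext
    show ((k' : G) - α (β (k' : G))) + α (β (k' : G)) = (k' : G)
    rw [sub_add_cancel]
  -- the finite side is finitely presented
  haveI hKfin : Module.Finite R ↥K' := Module.Finite.iff_fg.mpr hker
  haveI hfpK : Module.FinitePresentation S (↥K' →ₗ[R] T) := hom_fp R T hyp ↥K' hKfin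
  haveI hGfin : Module.Finite R G := by
    exact Module.Finite.equiv (Finsupp.linearEquivFunOnFinite R R s).symm
  have hN' : N'.FG := by
    show (LinearMap.range r').FG
    rw [LinearMap.range_eq_map]
    exact (Module.finite_def.mp (hyp G hGfin)).map r'
  haveI hC' : Module.FinitePresentation S ((↥K' →ₗ[R] T) ⧸ N') :=
    Module.finitePresentation_of_surjective N'.mkQ (Submodule.mkQ_surjective N')
      (by rwa [Submodule.ker_mkQ])
  exact Module.finitePresentation_of_surjective Φbar hsurj
    (by rw [hinj]; exact Submodule.fg_bot)
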